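/- Let w : ℝ² → ℝ be a nonzero homogeneous polynomial of degree k ≥ 2 all of whose real linear factors are simple (i.e. w = w₀ ∏_{j=1}^l (α_j x + β_j y) with w₀ nonvanishing on ℝ² ∖ {0} and the (α_j, β_j) pairwise non-collinear). Then the three second partial derivatives w_{xx}, w_{xy}, w_{yy} vanish simultaneously only at the origin. -/

import Mathlib

/-!
At a point `(x, y) ≠ 0` where the Hessian of `w` vanishes, Euler's identity applied to the
first partial derivatives (homogeneous of degree `k - 1 ≠ 0`) gives `∇w(x, y) = 0`, and applied
to `w` gives `w(x, y) = 0`. So exactly one linear factor `L_j = α_j x + β_j y` vanishes at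
`(x, y)` (two would force `(x, y) = 0`), and differentiating `w = w₀ ∏ L_i` along the direction
`(α_j, β_j)` gives `w₀(x, y) ∏_{i ≠ j} L_i(x, y) (α_j² + β_j²) = 0`, so `α_j = β_j = 0` and `w ≡ 0`.
-/

open Real

/-- Partial derivative in the first variable. -/
noncomputable def pdx (w : ℝ → ℝ → ℝ) (x y : ℝ) : ℝ := deriv (fun x' => w x' y) x

/-- Partial derivative in the second variable. -/
noncomputable def pdy (w : ℝ → ℝ → ℝ) (x y : ℝ) : ℝ := deriv (fun y' => w x y') y

/-- `w` is (the function of) a real polynomial in two variables. -/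
def IsPoly2 (w : ℝ → ℝ → ℝ) : Prop :=
  ∃ p : MvPolynomial (Fin 2) ℝ, ∀ x y : ℝ, w x y = MvPolynomial.eval ![x, y] p

/-- `w` is homogeneous of degree `k` as a function. -/
def Homog (w : ℝ → ℝ → ℝ) (k : ℕ) : Prop :=
  ∀ l x y : ℝ, w (l * x) (l * y) = l ^ k * w x y

namespace MvPolynomial

theorem pderiv_pderiv_comm {R σ : Type*} [CommRing R] (i j : σ) (p : MvPolynomial σ R) :
    pderiv i (pderiv j p) = pderiv j (pderiv i p) := by
  have hcomm : ⁅(pderiv i : Derivation R (MvPolynomial σ R) (MvPolynomial σ R)), pderiv j⁆ = 0 :=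
    derivation_ext fun k => by
      classical
      rw [Derivation.commutator_apply]
      simp [pderiv_X, Pi.single_apply, apply_ite]
  simpa [Derivation.commutator_apply, sub_eq_zero] using congr($hcomm p)

theorem hasDerivAt_eval_add_smul {𝕜 σ : Type*} [NontriviallyNormedField 𝕜] [Fintype σ]
    (p : MvPolynomial σ 𝕜) (v u : σ → 𝕜) (t : 𝕜) :
    HasDerivAt (fun s => eval (v + s • u) p) (∑ i, u i * eval (v + t • u) (pderiv i p)) t := by
  classical
  induction p using MvPolynomial.induction_on with
  | C r => simpa using hasDerivAt_const t r
  | add p q hp hq => simpa [Finset.sum_add_distrib, mul_add] using hp.fun_add hq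
  | mul_X p j hp =>
    have hX : HasDerivAt (fun s => v j + s * u j) (u j) t := by
      simpa using ((hasDerivAt_id t).mul_const (u j)).const_add (v j)
    have hfun : (fun s => eval (v + s • u) (p * X j))
        = fun s => eval (v + s • u) p * (v j + s * u j) := by
      ext s; simp
    rw [hfun]
    refine (hp.fun_mul hX).congr_deriv ?_
    simp only [pderiv_mul, map_add, map_mul, eval_X, mul_add, Finset.sum_add_distrib, ← mul_assoc,
      ← Finset.sum_mul, Pi.add_apply, Pi.smul_apply, smul_eq_mul, pderiv_X, Pi.single_apply,
      apply_ite (eval _), map_zero, mul_ite, mul_one, mul_zero, Finset.sum_ite_eq,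
      Finset.mem_univ, ↓reduceIte]
    ring

end MvPolynomial

open MvPolynomial

theorem hasDerivAt_eval_line (p : MvPolynomial (Fin 2) ℝ) (a b c d t : ℝ) :
    HasDerivAt (fun s => eval ![a + s * b, c + s * d] p)
      (b * eval ![a + t * b, c + t * d] (pderiv 0 p)
        + d * eval ![a + t * b, c + t * d] (pderiv 1 p)) t := by
  simpa [Fin.sum_univ_two] using hasDerivAt_eval_add_smul p ![a, c] ![b, d] t

theorem pdx_eval (p : MvPolynomial (Fin 2) ℝ) :
    pdx (fun x y => eval ![x, y] p) = fun x y => eval ![x, y] (pderiv 0 p) := by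
  ext x y
  simpa [pdx] using (hasDerivAt_eval_line p 0 1 y 0 x).deriv

theorem pdy_eval (p : MvPolynomial (Fin 2) ℝ) :
    pdy (fun x y => eval ![x, y] p) = fun x y => eval ![x, y] (pderiv 1 p) := by
  ext x y
  simpa [pdy] using (hasDerivAt_eval_line p x 0 0 1 y).deriv

variable {w : ℝ → ℝ → ℝ} {k : ℕ}

theorem IsPoly2.hasDerivAt_line (hw : IsPoly2 w) (a b c d t : ℝ) :
    HasDerivAt (fun s => w (a + s * b) (c + s * d))
      (b * pdx w (a + t * b) (c + t * d) + d * pdy w (a + t * b) (c + t * d)) t := by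
  obtain ⟨p, hp⟩ := hw
  obtain rfl : w = fun x y => eval ![x, y] p := funext₂ hp
  rw [pdx_eval, pdy_eval]
  exact hasDerivAt_eval_line p a b c d t

theorem IsPoly2.hasDerivAt_fst (hw : IsPoly2 w) (x y : ℝ) :
    HasDerivAt (fun x' => w x' y) (pdx w x y) x := by
  simpa using hw.hasDerivAt_line 0 1 y 0 x

theorem isPoly2_pdx (hw : IsPoly2 w) : IsPoly2 (pdx w) := by
  obtain ⟨p, hp⟩ := hw
  obtain rfl : w = fun x y => eval ![x, y] p := funext₂ hp
  exact ⟨pderiv 0 p, by simp [pdx_eval]⟩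

theorem IsPoly2.swap (hw : IsPoly2 w) : IsPoly2 (fun x y => w y x) := by
  obtain ⟨p, hp⟩ := hw
  refine ⟨rename (Equiv.swap 0 1) p, fun x y => ?_⟩
  show w y x = _
  have hcomp : ![x, y] ∘ Equiv.swap (0 : Fin 2) 1 = ![y, x] := by
    ext i
    fin_cases i <;> rfl
  rw [hp, eval_rename, hcomp]

theorem isPoly2_pdy (hw : IsPoly2 w) : IsPoly2 (pdy w) :=
  (isPoly2_pdx hw.swap).swap

theorem IsPoly2.pdy_pdx (hw : IsPoly2 w) : pdy (pdx w) = pdx (pdy w) := by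
  obtain ⟨p, hp⟩ := hw
  obtain rfl : w = fun x y => eval ![x, y] p := funext₂ hp
  simp only [pdx_eval, pdy_eval, pderiv_pderiv_comm]

theorem Homog.swap (hh : Homog w k) : Homog (fun x y => w y x) k :=
  fun l x y => hh l y x

theorem homog_pdx (hw : IsPoly2 w) (hh : Homog w (k + 1)) : Homog (pdx w) k := by
  have hscaled (l x y : ℝ) : l * pdx w (l * x) (l * y) = l * (l ^ k * pdx w x y) := by
    have h1 := (hw.hasDerivAt_fst (l * x) (l * y)).comp x ((hasDerivAt_id x).const_mul l)
    have h2 := (hw.hasDerivAt_fst x y).const_mul (l ^ (k + 1))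
    simp only [Function.comp_def, hh l _ y] at h1
    linear_combination h1.unique h2
  intro l x y
  -- At `l = 0` the scaling identity says nothing; extend it from `l ≠ 0` by continuity.
  have hcont : Continuous fun l => pdx w (l * x) (l * y) :=
    continuous_iff_continuousAt.2 fun s => by
      simpa using ((isPoly2_pdx hw).hasDerivAt_line 0 x 0 y s).continuousAt
  have hcont' : Continuous fun l : ℝ => l ^ k * pdx w x y := by fun_prop
  exact congrFun (Continuous.ext_on (dense_compl_singleton 0) hcont hcont'
    fun l hl => mul_left_cancel₀ hl (hscaled l x y)) l

theorem homog_pdy (hw : IsPoly2 w) (hh : Homog w (k + 1)) : Homog (pdy w) k :=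
  fun l x y => homog_pdx hw.swap hh.swap l y x

theorem Homog.euler (hw : IsPoly2 w) (hh : Homog w k) (x y : ℝ) :
    x * pdx w x y + y * pdy w x y = k * w x y := by
  have h := hw.hasDerivAt_line 0 x 0 y 1
  simp only [zero_add, one_mul, hh _ x y] at h
  simpa using h.unique ((hasDerivAt_pow k 1).mul_const (w x y))

theorem Homog.eq_zero_of_pdx_eq_zero_of_pdy_eq_zero (hw : IsPoly2 w) (hh : Homog w (k + 1))
    {x y : ℝ} (hx : pdx w x y = 0) (hy : pdy w x y = 0) : w x y = 0 := by
  have h := hh.euler hw x y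
  rw [hx, hy, mul_zero, mul_zero, add_zero, eq_comm, mul_eq_zero] at h
  exact h.resolve_left (by positivity)

theorem HasDerivAt.finsetProd_of_eq_zero {𝕜 𝔸 ι : Type*} [NontriviallyNormedField 𝕜]
    [NormedCommRing 𝔸] [NormedAlgebra 𝕜 𝔸] [DecidableEq ι] {u : Finset ι} {f : ι → 𝕜 → 𝔸}
    {f' : ι → 𝔸} {x : 𝕜} {j : ι} (hj : j ∈ u) (hf : ∀ i ∈ u, HasDerivAt (f i) (f' i) x)
    (hfj : f j x = 0) :
    HasDerivAt (∏ i ∈ u, f i ·) ((∏ i ∈ u.erase j, f i x) * f' j) x := by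
  refine (HasDerivAt.fun_finsetProd hf).congr_deriv ?_
  rw [Finset.sum_eq_single j (fun i _ hij => ?_) (absurd hj), smul_eq_mul]
  rw [Finset.prod_eq_zero (Finset.mem_erase.2 ⟨Ne.symm hij, hj⟩) hfj, zero_smul]

theorem eq_zero_of_det_ne_zero {K : Type*} [Field K] {a b c d x y : K} (hdet : a * d - c * b ≠ 0)
    (h₁ : a * x + b * y = 0) (h₂ : c * x + d * y = 0) : x = 0 ∧ y = 0 := by
  have hx : x * (a * d - c * b) = 0 := by linear_combination d * h₁ - b * h₂
  have hy : y * (a * d - c * b) = 0 := by linear_combination a * h₂ - c * h₁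
  exact ⟨(mul_eq_zero.1 hx).resolve_right hdet, (mul_eq_zero.1 hy).resolve_right hdet⟩

theorem IsPoly2.factor_coeffs_eq_zero {ι : Type*} [Fintype ι] [DecidableEq ι] {w₀ : ℝ → ℝ → ℝ}
    {α β : ι → ℝ} {x y : ℝ} {j : ι} (hw : IsPoly2 w) (hw₀ : IsPoly2 w₀)
    (hfac : ∀ x y, w x y = w₀ x y * ∏ i, (α i * x + β i * y)) (hw₀xy : w₀ x y ≠ 0)
    (hj : α j * x + β j * y = 0) (hothers : ∀ i ≠ j, α i * x + β i * y ≠ 0)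
    (hx : pdx w x y = 0) (hy : pdy w x y = 0) : α j = 0 ∧ β j = 0 := by
  have hfactor (i : ι) : HasDerivAt (fun s => α i * (x + s * α j) + β i * (y + s * β j))
      (α i * α j + β i * β j) 0 := by
    have hfun : (fun s => α i * (x + s * α j) + β i * (y + s * β j))
        = fun s => (α i * x + β i * y) + s * (α i * α j + β i * β j) := by
      ext s
      ring
    rw [hfun]
    simpa using ((hasDerivAt_id (0 : ℝ)).mul_const (α i * α j + β i * β j)).const_add
      (α i * x + β i * y)
  have hprod := HasDerivAt.finsetProd_of_eq_zero (Finset.mem_univ j) (fun i _ => hfactor i)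
    (by simpa using hj)
  have hline := (hw₀.hasDerivAt_line x (α j) y (β j) 0).fun_mul hprod
  simp only [← hfac, zero_mul, add_zero] at hline
  have hcrit := hw.hasDerivAt_line x (α j) y (β j) 0
  simp only [zero_mul, add_zero, hx, hy, mul_zero] at hcrit
  have h := hline.unique hcrit
  rw [Finset.prod_eq_zero (Finset.mem_univ j) hj, mul_zero, zero_add] at h
  have hrest : ∏ i ∈ Finset.univ.erase j, (α i * x + β i * y) ≠ 0 :=
    Finset.prod_ne_zero_iff.2 fun i hi => hothers i (Finset.ne_of_mem_erase hi)
  simpa [hw₀xy, hrest, mul_self_add_mul_self_eq_zero] using h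

theorem stmt_16_general (w : ℝ → ℝ → ℝ) (k : ℕ) (hk : 2 ≤ k)
    (hpoly : IsPoly2 w) (hhom : Homog w k) (hne : ∃ x y : ℝ, w x y ≠ 0)
    (l : ℕ) (α β : Fin l → ℝ) (w₀ : ℝ → ℝ → ℝ)
    (hw₀poly : IsPoly2 w₀)
    (hw₀ne : ∀ x y : ℝ, (x, y) ≠ (0, 0) → w₀ x y ≠ 0)
    (hncol : ∀ i j, i ≠ j → α i * β j - α j * β i ≠ 0)
    (hfac : ∀ x y : ℝ, w x y = w₀ x y * ∏ j, (α j * x + β j * y)) :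
    ∀ x y : ℝ, (x, y) ≠ (0, 0) →
      ¬(pdx (pdx w) x y = 0 ∧ pdy (pdx w) x y = 0 ∧ pdy (pdy w) x y = 0) := by
  obtain ⟨k, rfl⟩ := Nat.exists_eq_add_of_le' hk
  rintro x y hxy ⟨h11, h12, h22⟩
  have hx : pdx w x y = 0 :=
    (homog_pdx hpoly hhom).eq_zero_of_pdx_eq_zero_of_pdy_eq_zero (isPoly2_pdx hpoly) h11 h12
  have hy : pdy w x y = 0 :=
    (homog_pdy hpoly hhom).eq_zero_of_pdx_eq_zero_of_pdy_eq_zero (isPoly2_pdy hpoly)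
      (by rwa [← hpoly.pdy_pdx]) h22
  have hw : w x y = 0 := hhom.eq_zero_of_pdx_eq_zero_of_pdy_eq_zero hpoly hx hy
  have hw₀xy := hw₀ne x y hxy
  obtain ⟨j, -, hj⟩ : ∃ j ∈ Finset.univ, α j * x + β j * y = 0 :=
    Finset.prod_eq_zero_iff.1 ((mul_eq_zero.1 ((hfac x y).symm.trans hw)).resolve_left hw₀xy)
  have hothers : ∀ i ≠ j, α i * x + β i * y ≠ 0 := fun i hij hi =>
    hxy (Prod.ext_iff.2 (eq_zero_of_det_ne_zero (hncol i j hij) hi hj))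
  obtain ⟨hαj, hβj⟩ := hpoly.factor_coeffs_eq_zero hw₀poly hfac hw₀xy hj hothers hx hy
  obtain ⟨x₁, y₁, hne₁⟩ := hne
  exact hne₁ (by rw [hfac, Finset.prod_eq_zero (Finset.mem_univ j) (by simp [hαj, hβj]), mul_zero])

theorem stmt_16 (w : ℝ → ℝ → ℝ) (k : ℕ) (hk : 2 ≤ k)
    (hpoly : IsPoly2 w) (hhom : Homog w k) (hne : ∃ x y : ℝ, w x y ≠ 0)
    (l : ℕ) (α β : Fin l → ℝ) (w₀ : ℝ → ℝ → ℝ) (d : ℕ)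
    (hw₀poly : IsPoly2 w₀) (hw₀hom : Homog w₀ d)
    (hw₀ne : ∀ x y : ℝ, (x, y) ≠ (0, 0) → w₀ x y ≠ 0)
    (hncol : ∀ i j, i ≠ j → α i * β j - α j * β i ≠ 0)
    (hfac : ∀ x y : ℝ, w x y = w₀ x y * ∏ j, (α j * x + β j * y)) :
    ∀ x y : ℝ, (x, y) ≠ (0, 0) →
      ¬(pdx (pdx w) x y = 0 ∧ pdy (pdx w) x y = 0 ∧ pdy (pdy w) x y = 0) :=
  stmt_16_general w k hk hpoly hhom hne l α β w₀ hw₀poly hw₀ne hncol hfac
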